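/- Let q ≥ 3 be a prime power and identify the alphabet with the finite field F_q. Let M ⊆ F_q^q be a linear MDS code of length q with minimum distance 2, let C0 ⊂ M be a linear MDS code of length q with minimum distance 3, and let C1 = v + C0 be a coset of C0 with v ∈ M \ C0. Then (C0, C1) is a spherical bitrade in the Hamming graph H(q, q) of volume q^{q−2}. -/

import Mathlib

open scoped BigOperators

/-- The ball of radius 1 centered at `x` in a graph `G`. -/
def ball1 {V : Type*} (G : SimpleGraph V) (x : V) : Set V := {y | y = x ∨ G.Adj x y}

/-- A perfect one-error-correcting code: the balls of radius 1 centered at the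
vertices of `C` partition the vertex set. -/
def IsPerfectCode {V : Type*} (G : SimpleGraph V) (C : Set V) : Prop :=
  ∀ x : V, ∃! c, c ∈ C ∧ c ∈ ball1 G x

/-- A perfect bitrade: a pair of disjoint nonempty vertex sets such that every ball of
radius 1 contains exactly one vertex of each, or none of either. -/
def IsPerfectBitrade {V : Type*} (G : SimpleGraph V) (T0 T1 : Set V) : Prop :=
  Disjoint T0 T1 ∧ T0.Nonempty ∧ T1.Nonempty ∧
    ∀ x : V,
      ((∃! y, y ∈ T0 ∧ y ∈ ball1 G x) ∧ (∃! y, y ∈ T1 ∧ y ∈ ball1 G x)) ∨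
        (∀ y, y ∈ T0 ∪ T1 → y ∉ ball1 G x)

/-- A spherical bitrade: a pair of disjoint nonempty vertex sets such that every sphere of
radius 1 contains exactly one vertex of each, or none of either. -/
def IsSphericalBitrade {V : Type*} (G : SimpleGraph V) (S0 S1 : Set V) : Prop :=
  Disjoint S0 S1 ∧ S0.Nonempty ∧ S1.Nonempty ∧
    ∀ x : V,
      ((∃! y, y ∈ S0 ∧ G.Adj x y) ∧ (∃! y, y ∈ S1 ∧ G.Adj x y)) ∨
        (∀ y, y ∈ S0 ∪ S1 → ¬ G.Adj x y)

/-- The Hamming graph `H(n,q)`: vertices are `n`-tuples over an alphabet of size `q`,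
adjacent iff they differ in exactly one coordinate. -/
def hammingGraph (n q : ℕ) : SimpleGraph (Fin n → Fin q) where
  Adj x y := hammingDist x y = 1
  symm := ⟨fun x y (h : hammingDist x y = 1) => show hammingDist y x = 1 by rwa [hammingDist_comm]⟩
  loopless := ⟨fun x (h : hammingDist x x = 1) => by simp [hammingDist_self] at h⟩

/-- `f` is a `μ`-eigenfunction of `G`: `f` is not identically zero and
`μ · f x = ∑_{y ∈ O(x)} f y` for every vertex `x`. -/
def IsEigenfun {V : Type*} (G : SimpleGraph V) (μ : ℝ) (f : V → ℝ) : Prop :=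
  f ≠ 0 ∧ ∀ x : V, μ * f x = ∑ᶠ y ∈ G.neighborSet x, f y

/-- The characteristic function of a set of vertices. -/
noncomputable def chi {V : Type*} (C : Set V) : V → ℝ := Set.indicator C 1

/-- The code `C` has minimum (graph) distance exactly `d`. -/
def HasMinDist {V : Type*} (G : SimpleGraph V) (C : Set V) (d : ℕ) : Prop :=
  (∀ x ∈ C, ∀ y ∈ C, x ≠ y → (d : ℕ∞) ≤ G.edist x y) ∧
    ∃ x ∈ C, ∃ y ∈ C, x ≠ y ∧ G.edist x y = d

/-- The code `C` of `n`-tuples has minimum Hamming distance exactly `d`. -/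
def HasMinHDist {n q : ℕ} (C : Set (Fin n → Fin q)) (d : ℕ) : Prop :=
  (∀ x ∈ C, ∀ y ∈ C, x ≠ y → d ≤ hammingDist x y) ∧
    ∃ x ∈ C, ∃ y ∈ C, x ≠ y ∧ hammingDist x y = d

/-- `G` is distance-regular with intersection numbers `p i j k`. -/
def IsDistRegular {V : Type*} (G : SimpleGraph V) (p : ℕ → ℕ → ℕ → ℕ) : Prop :=
  G.Connected ∧ ∀ (i j k : ℕ) (x y : V), G.edist x y = k →
    {z : V | G.edist x z = i ∧ G.edist z y = j}.ncard = p i j k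

/-- The Hamming graph on `n`-tuples over the alphabet `F`. -/
def hammingGraphF (n : ℕ) (F : Type*) [Fintype F] [DecidableEq F] :
    SimpleGraph (Fin n → F) where
  Adj x y := hammingDist x y = 1
  symm := ⟨fun x y (h : hammingDist x y = 1) => show hammingDist y x = 1 by rwa [hammingDist_comm]⟩
  loopless := ⟨fun x (h : hammingDist x x = 1) => by simp [hammingDist_self] at h⟩

/-- Minimum Hamming distance exactly `d`, for codes over an arbitrary alphabet. -/
def HasMinHDistF {n : ℕ} {F : Type*} [Fintype (Fin n)] [DecidableEq F]
    (C : Set (Fin n → F)) (d : ℕ) : Prop :=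
  (∀ x ∈ C, ∀ y ∈ C, x ≠ y → d ≤ hammingDist x y) ∧
    ∃ x ∈ C, ∃ y ∈ C, x ≠ y ∧ hammingDist x y = d

/-!
No two words of `M` are adjacent, so only words outside `M` can have neighbours in `C0 ∪ C1`.
Each `Ci` (with `C1 = v + C0`) is a subset of `M` of size `q ^ (q - 2)` and minimum distance 3,
so its unit spheres are pairwise disjoint and avoid `M`. Together they contain
`q ^ (q - 2) * q * (q - 1) = q ^ q - q ^ (q - 1)` words, which is exactly the number of words
outside `M`; hence every word outside `M` has exactly one neighbour in `C0` and one in `C1`.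
-/

open Finset

lemma pow_sub_two_mul_add_pow_sub_one (q : ℕ) :
    q ^ (q - 2) * (q * (q - 1)) + q ^ (q - 1) = q ^ q := by
  rcases q with _ | _ | q
  · simp
  · simp
  · rw [show q + 2 - 2 = q by omega, show q + 2 - 1 = q + 1 by omega]
    ring

lemma isSphericalBitrade_of_existsUnique_adj {V : Type*} (G : SimpleGraph V) {M S0 S1 : Set V}
    (hM : ∀ x ∈ M, ∀ y ∈ M, ¬ G.Adj x y) (hS0M : S0 ⊆ M) (hS1M : S1 ⊆ M)
    (hdisj : Disjoint S0 S1) (hS0 : S0.Nonempty) (hS1 : S1.Nonempty)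
    (hS0adj : ∀ x ∉ M, ∃! y, y ∈ S0 ∧ G.Adj x y) (hS1adj : ∀ x ∉ M, ∃! y, y ∈ S1 ∧ G.Adj x y) :
    IsSphericalBitrade G S0 S1 := by
  refine ⟨hdisj, hS0, hS1, fun x => ?_⟩
  by_cases hx : x ∈ M
  · exact Or.inr fun y hy => hM x hx y (Set.union_subset hS0M hS1M hy)
  · exact Or.inl ⟨hS0adj x hx, hS1adj x hx⟩

section Hamming

variable {ι β : Type*} [Fintype ι] [DecidableEq β]

lemma hammingDist_add_left [AddGroup β] (v x y : ι → β) :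
    hammingDist (v + x) (v + y) = hammingDist x y :=
  hammingDist_comp (fun i b => v i + b) fun i => add_right_injective (v i)

lemma hammingDist_eq_one_iff_exists_update [DecidableEq ι] {c y : ι → β} :
    hammingDist c y = 1 ↔ ∃ i, ∃ b ≠ c i, Function.update c i b = y := by
  constructor
  · intro h
    obtain ⟨i, hi⟩ := card_eq_one.mp h
    have hne : ∀ j, c j ≠ y j ↔ j = i := fun j => by
      rw [← mem_singleton, ← hi, mem_filter, and_iff_right (mem_univ j)]
    refine ⟨i, y i, fun h => (hne i).2 rfl h.symm, funext fun j => ?_⟩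
    rcases eq_or_ne j i with rfl | hj
    · exact Function.update_self ..
    · rw [Function.update_of_ne hj]
      exact not_not.1 fun h => hj ((hne j).1 h)
  · rintro ⟨i, b, hb, rfl⟩
    refine card_eq_one.mpr ⟨i, eq_singleton_iff_unique_mem.mpr ⟨?_, fun j hj => ?_⟩⟩
    · simpa using hb.symm
    · by_contra hji
      simp [Function.update_of_ne hji] at hj

lemma card_filter_hammingDist_eq_one [DecidableEq ι] [Fintype β] (c : ι → β) :
    #{y | hammingDist c y = 1} = Fintype.card ι * (Fintype.card β - 1) := by
  have hsphere : ({y | hammingDist c y = 1} : Finset (ι → β)) =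
      (univ.sigma fun i => univ.erase (c i)).image fun p => Function.update c p.1 p.2 := by
    ext y
    simp [hammingDist_eq_one_iff_exists_update]
  have hinj : Set.InjOn (fun p : (_ : ι) × β => Function.update c p.1 p.2)
      (univ.sigma fun i => univ.erase (c i)) := by
    rintro ⟨i, b⟩ hb ⟨j, b'⟩ - h
    have hb : b ≠ c i := (mem_erase.1 (mem_sigma.1 hb).2).1
    obtain rfl : i = j := by
      by_contra hij
      have hi : Function.update c i b i = Function.update c j b' i := congrFun h i
      rw [Function.update_self, Function.update_of_ne hij] at hi
      exact hb hi
    simpa using congrFun h i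
  rw [hsphere, card_image_of_injOn hinj, card_sigma]
  simp [card_erase_of_mem]

end Hamming

section Covering

variable {ι β : Type*} [Fintype ι] [DecidableEq ι] [Fintype β] [DecidableEq β] {q : ℕ}
  {M C : Set (ι → β)}

lemma exists_hammingDist_eq_one_of_notMem (hι : Fintype.card ι = q) (hβ : Fintype.card β = q)
    (hM : ∀ x ∈ M, ∀ y ∈ M, x ≠ y → 2 ≤ hammingDist x y) (hMcard : M.ncard = q ^ (q - 1))
    (hCM : C ⊆ M) (hC : ∀ x ∈ C, ∀ y ∈ C, x ≠ y → 3 ≤ hammingDist x y)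
    (hCcard : C.ncard = q ^ (q - 2)) {x : ι → β} (hx : x ∉ M) :
    ∃ c ∈ C, hammingDist c x = 1 := by
  classical
  obtain ⟨C, rfl⟩ := C.toFinite.exists_finset_coe
  obtain ⟨M, rfl⟩ := M.toFinite.exists_finset_coe
  rw [Set.ncard_coe_finset] at hMcard hCcard
  set U := C.biUnion fun c => ({y | hammingDist c y = 1} : Finset (ι → β))
  have hUM : U ⊆ Mᶜ := by
    simp only [U, subset_iff, mem_biUnion, mem_filter, mem_univ, true_and, mem_compl]
    rintro y ⟨c, hc, hcy⟩ hy
    have := hM c (hCM hc) y hy (by rintro rfl; simp at hcy)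
    omega
  have hdisj : (C : Set (ι → β)).PairwiseDisjoint
      fun c => ({y | hammingDist c y = 1} : Finset (ι → β)) := by
    intro a ha b hb hab
    simp only [Function.onFun, disjoint_left, mem_filter, mem_univ, true_and]
    intro y hay hby
    have := hC a ha b hb hab
    have := hammingDist_triangle a y b
    rw [hammingDist_comm y b] at this
    omega
  have hUcard : #Mᶜ ≤ #U := by
    rw [card_biUnion hdisj, sum_congr rfl fun c _ => card_filter_hammingDist_eq_one c, sum_const,
      smul_eq_mul, card_compl, Fintype.card_fun, hι, hβ, hCcard, hMcard,
      ← pow_sub_two_mul_add_pow_sub_one q, Nat.add_sub_cancel]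
  have hxU : x ∈ U := (eq_of_subset_of_card_le hUM hUcard).symm ▸ mem_compl.2 hx
  simpa [U] using hxU

lemma existsUnique_hammingDist_eq_one_of_notMem (hι : Fintype.card ι = q)
    (hβ : Fintype.card β = q)
    (hM : ∀ x ∈ M, ∀ y ∈ M, x ≠ y → 2 ≤ hammingDist x y) (hMcard : M.ncard = q ^ (q - 1))
    (hCM : C ⊆ M) (hC : ∀ x ∈ C, ∀ y ∈ C, x ≠ y → 3 ≤ hammingDist x y)
    (hCcard : C.ncard = q ^ (q - 2)) {x : ι → β} (hx : x ∉ M) :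
    ∃! c, c ∈ C ∧ hammingDist x c = 1 := by
  obtain ⟨c, hc, hcx⟩ := exists_hammingDist_eq_one_of_notMem hι hβ hM hMcard hCM hC hCcard hx
  rw [hammingDist_comm] at hcx
  refine ⟨c, ⟨hc, hcx⟩, fun y ⟨hy, hxy⟩ => ?_⟩
  by_contra hyc
  have := hC y hy c hc hyc
  have := hammingDist_triangle y x c
  rw [hammingDist_comm y x] at this
  omega

end Covering

theorem statement18_general (q : ℕ)
    (F : Type) [Field F] [Fintype F] [DecidableEq F] (hcard : Fintype.card F = q)
    (M C0 : Submodule F (Fin q → F))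
    (hMmds : Nat.card M = q ^ (q - 1)) (hMdist : HasMinHDistF (M : Set (Fin q → F)) 2)
    (hC0mds : Nat.card C0 = q ^ (q - 2)) (hC0dist : HasMinHDistF (C0 : Set (Fin q → F)) 3)
    (hC0M : C0 < M) (v : Fin q → F) (hvM : v ∈ M) (hvC0 : v ∉ C0) :
    IsSphericalBitrade (hammingGraphF q F)
      (C0 : Set (Fin q → F)) ((fun c => v + c) '' (C0 : Set (Fin q → F))) ∧
    (C0 : Set (Fin q → F)).ncard = q ^ (q - 2) := by
  set C1 := (fun c => v + c) '' (C0 : Set (Fin q → F))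
  have hMcard : (M : Set (Fin q → F)).ncard = q ^ (q - 1) := by
    rwa [← Nat.card_coe_set_eq]
  have hC0card : (C0 : Set (Fin q → F)).ncard = q ^ (q - 2) := by
    rwa [← Nat.card_coe_set_eq]
  have hC1card : C1.ncard = q ^ (q - 2) := by
    rw [Set.ncard_image_of_injective _ (add_right_injective v), hC0card]
  have hC1dist : ∀ x ∈ C1, ∀ y ∈ C1, x ≠ y → 3 ≤ hammingDist x y := by
    rintro _ ⟨a, ha, rfl⟩ _ ⟨b, hb, rfl⟩ hab
    rw [hammingDist_add_left]
    exact hC0dist.1 a ha b hb fun h => hab (congrArg (v + ·) h)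
  have hC0M' : (C0 : Set (Fin q → F)) ⊆ M := hC0M.le
  have hC1M : C1 ⊆ M := by
    rintro _ ⟨c, hc, rfl⟩
    exact M.add_mem hvM (hC0M.le hc)
  have hMindep : ∀ x ∈ (M : Set (Fin q → F)), ∀ y ∈ (M : Set (Fin q → F)),
      ¬ (hammingGraphF q F).Adj x y := fun x hx y hy (hxy : hammingDist x y = 1) => by
    have := hMdist.1 x hx y hy (by rintro rfl; simp at hxy)
    omega
  have hdisj : Disjoint (C0 : Set (Fin q → F)) C1 := Set.disjoint_left.2 fun a ha ⟨c, hc, hca⟩ =>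
    hvC0 (by simpa [← hca] using C0.sub_mem ha hc)
  have hlen : Fintype.card (Fin q) = q := Fintype.card_fin q
  refine ⟨isSphericalBitrade_of_existsUnique_adj _ hMindep hC0M' hC1M hdisj ⟨0, C0.zero_mem⟩
    (Set.Nonempty.image _ ⟨0, C0.zero_mem⟩) (fun x hx => ?_) (fun x hx => ?_), hC0card⟩
  · exact existsUnique_hammingDist_eq_one_of_notMem hlen hcard hMdist.1 hMcard hC0M' hC0dist.1
      hC0card hx
  · exact existsUnique_hammingDist_eq_one_of_notMem hlen hcard hMdist.1 hMcard hC1M hC1dist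
      hC1card hx

/-- Over a finite field `F` with `q ≥ 3` elements, if `M` is a linear MDS code
of length `q` with minimum distance 2, `C0 ⊂ M` is a linear MDS code of length `q` with
minimum distance 3, and `C1 = v + C0` for some `v ∈ M \ C0`, then `(C0, C1)` is a spherical
bitrade in `H(q,q)` of volume `q^(q-2)`. -/
theorem statement18 (q : ℕ) (hq : 3 ≤ q)
    (F : Type) [Field F] [Fintype F] [DecidableEq F] (hcard : Fintype.card F = q)
    (M C0 : Submodule F (Fin q → F))
    (hMmds : Nat.card M = q ^ (q - 1)) (hMdist : HasMinHDistF (M : Set (Fin q → F)) 2)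
    (hC0mds : Nat.card C0 = q ^ (q - 2)) (hC0dist : HasMinHDistF (C0 : Set (Fin q → F)) 3)
    (hC0M : C0 < M) (v : Fin q → F) (hvM : v ∈ M) (hvC0 : v ∉ C0) :
    IsSphericalBitrade (hammingGraphF q F)
      (C0 : Set (Fin q → F)) ((fun c => v + c) '' (C0 : Set (Fin q → F))) ∧
    (C0 : Set (Fin q → F)).ncard = q ^ (q - 2) :=
  statement18_general q F hcard M C0 hMmds hMdist hC0mds hC0dist hC0M v hvM hvC0
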